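/- Let α > 0 and let g be a bounded analytic function on the unit disk. The generalized Alexander operator C_g(f)(z) = ∫_0^z f(w)g(w)/w dw is a compact linear operator from B_α^0 to B_α^0: for every sequence (f_m) in B_α^0 with ‖f_m‖_{B_α} ≤ M for all m and f_m → 0 uniformly on compact subsets of D, one has ‖C_g(f_m)‖_{B_α} → 0. -/

import Mathlib

/-!
Fix `0 < r < 1` and let `‖f‖ ≤ δ` on `closedBall 0 r`. For `‖z‖ < r` the Schwarz lemma gives
`‖f z‖ ≤ δ ‖z‖ / r`. For `r ≤ ‖z‖ < 1` the Bloch bound gives `‖f'‖ ≤ M / (1 - ‖z‖²)^α` on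
`closedBall 0 ‖z‖`, and comparing `f z` with the value of `f` at the point of norm `r` on the ray
through `z` gives `(1 - ‖z‖²)^α ‖f z‖ ≤ δ + M (1 - r)`. In both cases
`(1 - ‖z‖²)^α ‖f z‖ / ‖z‖ ≤ (δ + M (1 - r)) / r`. Uniform convergence on `closedBall 0 r` makes
`δ` arbitrarily small for large `m`, after `r` has been chosen close to `1`.
-/

open Filter Metric Topology

lemma exists_norm_eq_norm_sub_eq {E : Type*} [NormedAddCommGroup E] [NormedSpace ℝ E] {r : ℝ}
    (hr : 0 ≤ r) {z : E} (hrz : r ≤ ‖z‖) :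
    ∃ a : E, ‖a‖ = r ∧ ‖z - a‖ = ‖z‖ - r := by
  rcases eq_or_ne z 0 with rfl | hz
  · obtain rfl : r = 0 := by simp at hrz; linarith
    exact ⟨0, by simp⟩
  have hz' : 0 < ‖z‖ := norm_pos_iff.2 hz
  refine ⟨(r / ‖z‖) • z, ?_, ?_⟩
  · rw [norm_smul, Real.norm_of_nonneg (by positivity), div_mul_cancel₀ _ hz'.ne']
  · rw [show z - (r / ‖z‖) • z = (1 - r / ‖z‖) • z by rw [sub_smul, one_smul], norm_smul,
      Real.norm_of_nonneg (by rw [sub_nonneg, div_le_one hz']; exact hrz), sub_mul, one_mul,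
      div_mul_cancel₀ _ hz'.ne']

lemma norm_le_div_mul_norm_of_forall_norm_le {E F : Type*} [NormedAddCommGroup E]
    [NormedSpace ℂ E] [NormedAddCommGroup F] [NormedSpace ℂ F] {f : E → F} {r δ : ℝ}
    (hf : DifferentiableOn ℂ f (ball 0 r)) (hf0 : f 0 = 0) (hδ : ∀ w ∈ ball (0 : E) r, ‖f w‖ ≤ δ)
    {z : E} (hz : z ∈ ball 0 r) :
    ‖f z‖ ≤ δ / r * ‖z‖ := by
  have hmaps : Set.MapsTo f (ball 0 r) (closedBall (f 0) δ) := fun w hw ↦ by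
    simpa [hf0] using hδ w hw
  simpa [hf0] using Complex.dist_le_div_mul_dist_of_mapsTo_ball hf hmaps hz

section

variable {f : ℂ → ℂ} {α M r δ : ℝ}

lemma one_sub_norm_sq_rpow_nonneg {z : ℂ} (hz : z ∈ ball (0 : ℂ) 1) :
    0 ≤ (1 - ‖z‖ ^ 2) ^ α :=
  Real.rpow_nonneg (by nlinarith [norm_nonneg z, mem_ball_zero_iff.1 hz]) α

lemma norm_deriv_le_of_norm_le (hα : 0 ≤ α)
    (hM : ∀ z ∈ ball (0 : ℂ) 1, (1 - ‖z‖ ^ 2) ^ α * ‖deriv f z‖ ≤ M)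
    {s : ℝ} (hs : s < 1) {w : ℂ} (hw : ‖w‖ ≤ s) :
    ‖deriv f w‖ ≤ M / (1 - s ^ 2) ^ α := by
  have hs2 : 0 < 1 - s ^ 2 := by nlinarith [norm_nonneg w]
  rw [le_div_iff₀ (Real.rpow_pos_of_pos hs2 α), mul_comm]
  calc (1 - s ^ 2) ^ α * ‖deriv f w‖ ≤ (1 - ‖w‖ ^ 2) ^ α * ‖deriv f w‖ := by gcongr
    _ ≤ M := hM w (mem_ball_zero_iff.2 (hw.trans_lt hs))

lemma one_sub_norm_sq_rpow_mul_norm_sub_le (hα : 0 ≤ α) (hf : DifferentiableOn ℂ f (ball 0 1))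
    (hM : ∀ z ∈ ball (0 : ℂ) 1, (1 - ‖z‖ ^ 2) ^ α * ‖deriv f z‖ ≤ M)
    {a z : ℂ} (hz : z ∈ ball 0 1) (haz : ‖a‖ ≤ ‖z‖) :
    (1 - ‖z‖ ^ 2) ^ α * ‖f z - f a‖ ≤ M * ‖z - a‖ := by
  have hz1 : ‖z‖ < 1 := mem_ball_zero_iff.1 hz
  have hP : 0 < (1 - ‖z‖ ^ 2) ^ α := Real.rpow_pos_of_pos (by nlinarith [norm_nonneg z]) α
  have hsub : closedBall (0 : ℂ) ‖z‖ ⊆ ball 0 1 := closedBall_subset_ball hz1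
  have hlip := (convex_closedBall (0 : ℂ) ‖z‖).norm_image_sub_le_of_norm_deriv_le
    (fun w hw ↦ hf.differentiableAt (isOpen_ball.mem_nhds (hsub hw)))
    (fun w hw ↦ norm_deriv_le_of_norm_le hα hM hz1 (mem_closedBall_zero_iff.1 hw))
    (mem_closedBall_zero_iff.2 haz) (mem_closedBall_zero_iff.2 le_rfl)
  calc (1 - ‖z‖ ^ 2) ^ α * ‖f z - f a‖
      ≤ (1 - ‖z‖ ^ 2) ^ α * (M / (1 - ‖z‖ ^ 2) ^ α * ‖z - a‖) := by gcongr
    _ = M * ‖z - a‖ := by field_simp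

theorem one_sub_norm_sq_rpow_mul_norm_div_le (hα : 0 ≤ α)
    (hf : DifferentiableOn ℂ f (ball 0 1)) (hf0 : f 0 = 0)
    (hM : ∀ z ∈ ball (0 : ℂ) 1, (1 - ‖z‖ ^ 2) ^ α * ‖deriv f z‖ ≤ M)
    (hr : 0 < r) (hr1 : r < 1) (hδ : ∀ w ∈ closedBall (0 : ℂ) r, ‖f w‖ ≤ δ)
    {z : ℂ} (hz : z ∈ ball 0 1) :
    (1 - ‖z‖ ^ 2) ^ α * ‖f z‖ / ‖z‖ ≤ (δ + M * (1 - r)) / r := by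
  have hM0 : 0 ≤ M := (norm_nonneg _).trans (by simpa using hM 0 (mem_ball_self one_pos))
  have hδ0 : 0 ≤ δ := (norm_nonneg _).trans (hδ 0 (mem_closedBall_self hr.le))
  have hz1 : ‖z‖ < 1 := mem_ball_zero_iff.1 hz
  have hP0 : 0 ≤ (1 - ‖z‖ ^ 2) ^ α := one_sub_norm_sq_rpow_nonneg hz
  have hP1 : (1 - ‖z‖ ^ 2) ^ α ≤ 1 := Real.rpow_le_one (by nlinarith [norm_nonneg z])
    (by nlinarith [norm_nonneg z]) hα
  rcases lt_or_ge ‖z‖ r with hzr | hrz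
  · have hschwarz := norm_le_div_mul_norm_of_forall_norm_le (hf.mono (ball_subset_ball hr1.le))
      hf0 (fun w hw ↦ hδ w (ball_subset_closedBall hw)) (mem_ball_zero_iff.2 hzr)
    refine div_le_of_le_mul₀ (norm_nonneg _) (by positivity) ?_
    calc (1 - ‖z‖ ^ 2) ^ α * ‖f z‖ ≤ ‖f z‖ := mul_le_of_le_one_left (norm_nonneg _) hP1
      _ ≤ δ / r * ‖z‖ := hschwarz
      _ ≤ (δ + M * (1 - r)) / r * ‖z‖ := by gcongr; nlinarith
  · obtain ⟨a, ha, hza⟩ := exists_norm_eq_norm_sub_eq hr.le hrz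
    have hlip := one_sub_norm_sq_rpow_mul_norm_sub_le hα hf hM hz (ha.trans_le hrz)
    have hfa : ‖f a‖ ≤ δ := hδ a (mem_closedBall_zero_iff.2 ha.le)
    refine div_le_div₀ (by nlinarith) ?_ hr hrz
    calc (1 - ‖z‖ ^ 2) ^ α * ‖f z‖
        ≤ (1 - ‖z‖ ^ 2) ^ α * ‖f a‖ + (1 - ‖z‖ ^ 2) ^ α * ‖f z - f a‖ := by
          rw [← mul_add]; gcongr; exact norm_le_norm_add_norm_sub' _ _
      _ ≤ δ + M * (‖z‖ - r) := by
          rw [← hza]; gcongr; exact (mul_le_of_le_one_left (norm_nonneg _) hP1).trans hfa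
      _ ≤ δ + M * (1 - r) := by gcongr

theorem sSup_one_sub_norm_sq_rpow_mul_norm_mul_div_le {g : ℂ → ℂ} {C : ℝ} (hα : 0 ≤ α)
    (hf : DifferentiableOn ℂ f (ball 0 1)) (hf0 : f 0 = 0)
    (hM : ∀ z ∈ ball (0 : ℂ) 1, (1 - ‖z‖ ^ 2) ^ α * ‖deriv f z‖ ≤ M)
    (hg : ∀ z ∈ ball (0 : ℂ) 1, ‖g z‖ ≤ C)
    (hr : 0 < r) (hr1 : r < 1) (hδ : ∀ w ∈ closedBall (0 : ℂ) r, ‖f w‖ ≤ δ) :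
    sSup {c : ℝ | ∃ z ∈ ball (0 : ℂ) 1, z ≠ 0 ∧ c = (1 - ‖z‖ ^ 2) ^ α * ‖f z * g z / z‖} ≤
      C * ((δ + M * (1 - r)) / r) := by
  have hC : 0 ≤ C := (norm_nonneg _).trans (hg 0 (mem_ball_self one_pos))
  have hB : ∀ z ∈ ball (0 : ℂ) 1, (1 - ‖z‖ ^ 2) ^ α * ‖f z‖ / ‖z‖ ≤ (δ + M * (1 - r)) / r :=
    fun z hz ↦ one_sub_norm_sq_rpow_mul_norm_div_le hα hf hf0 hM hr hr1 hδ hz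
  have hB0 : 0 ≤ (δ + M * (1 - r)) / r := by simpa using hB 0 (mem_ball_self one_pos)
  refine Real.sSup_le ?_ (mul_nonneg hC hB0)
  rintro _ ⟨z, hz, -, rfl⟩
  calc (1 - ‖z‖ ^ 2) ^ α * ‖f z * g z / z‖ = (1 - ‖z‖ ^ 2) ^ α * ‖f z‖ / ‖z‖ * ‖g z‖ := by
        rw [norm_div, norm_mul]; ring
    _ ≤ (δ + M * (1 - r)) / r * C := mul_le_mul (hB z hz) (hg z hz) (norm_nonneg _) hB0
    _ = C * ((δ + M * (1 - r)) / r) := mul_comm _ _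

end

theorem stmt_13_general (α M C : ℝ) (hα : 0 < α) (g : ℂ → ℂ)
    (hgb : ∀ z ∈ Metric.ball (0:ℂ) 1, ‖g z‖ ≤ C)
    (F : ℕ → ℂ → ℂ)
    (hF : ∀ m, DifferentiableOn ℂ (F m) (Metric.ball (0:ℂ) 1))
    (hF0 : ∀ m, F m 0 = 0)
    (hFM : ∀ m, ∀ z ∈ Metric.ball (0:ℂ) 1, (1 - ‖z‖ ^ 2) ^ α * ‖deriv (F m) z‖ ≤ M)
    (hconv : ∀ K ⊆ Metric.ball (0:ℂ) 1, IsCompact K →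
      TendstoUniformlyOn F 0 atTop K) :
    Tendsto (fun m => sSup {c : ℝ | ∃ z ∈ Metric.ball (0:ℂ) 1, z ≠ 0 ∧
      c = (1 - ‖z‖ ^ 2) ^ α * ‖F m z * g z / z‖}) atTop (nhds 0) := by
  -- the bound `C * ((δ + M * (1 - r)) / r)` with `r = 1 - t` and `δ = t`
  have hbound : Tendsto (fun t : ℝ ↦ C * ((t + M * (1 - (1 - t))) / (1 - t))) (𝓝[>] 0) (𝓝 0) := by
    apply tendsto_nhdsWithin_of_tendsto_nhds
    have : ContinuousAt (fun t : ℝ ↦ C * ((t + M * (1 - (1 - t))) / (1 - t))) 0 := by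
      fun_prop (disch := norm_num)
    simpa using this.tendsto
  refine tendsto_order.2 ⟨fun a ha ↦ .of_forall fun m ↦ ha.trans_le (Real.sSup_nonneg ?_),
    fun ε hε ↦ ?_⟩
  · rintro _ ⟨z, hz, -, rfl⟩
    exact mul_nonneg (one_sub_norm_sq_rpow_nonneg hz) (norm_nonneg _)
  obtain ⟨t, hεt, ht0, ht1⟩ :=
    ((hbound.eventually (gt_mem_nhds hε)).and (Ioo_mem_nhdsGT one_pos)).exists
  have hK := hconv _ (closedBall_subset_ball (by linarith : 1 - t < 1)) (isCompact_closedBall 0 _)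
  filter_upwards [tendstoUniformlyOn_iff.1 hK t ht0] with m hm
  exact (sSup_one_sub_norm_sq_rpow_mul_norm_mul_div_le hα.le (hF m) (hF0 m) (hFM m) hgb
    (by linarith) (by linarith) (fun w hw ↦ by simpa using (hm w hw).le)).trans_lt hεt

/-- Theorem 3.3: the generalized Alexander operator C_g(f)(z) = ∫_0^z f(w)g(w)/w dw
(with g bounded analytic) is compact on B_α^0: for every norm-bounded sequence (f_m)
converging to 0 uniformly on compact subsets, the Bloch seminorm of C_g(f_m)
(the sup of (1-|z|²)^α |f_m(z)g(z)/z|) tends to 0. -/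
theorem stmt_13 (α M C : ℝ) (hα : 0 < α) (g : ℂ → ℂ)
    (hg : DifferentiableOn ℂ g (Metric.ball (0:ℂ) 1))
    (hgb : ∀ z ∈ Metric.ball (0:ℂ) 1, ‖g z‖ ≤ C)
    (F : ℕ → ℂ → ℂ)
    (hF : ∀ m, DifferentiableOn ℂ (F m) (Metric.ball (0:ℂ) 1))
    (hF0 : ∀ m, F m 0 = 0)
    (hFM : ∀ m, ∀ z ∈ Metric.ball (0:ℂ) 1, (1 - ‖z‖ ^ 2) ^ α * ‖deriv (F m) z‖ ≤ M)
    (hconv : ∀ K ⊆ Metric.ball (0:ℂ) 1, IsCompact K →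
      TendstoUniformlyOn F 0 atTop K) :
    Tendsto (fun m => sSup {c : ℝ | ∃ z ∈ Metric.ball (0:ℂ) 1, z ≠ 0 ∧
      c = (1 - ‖z‖ ^ 2) ^ α * ‖F m z * g z / z‖}) atTop (nhds 0) :=
  stmt_13_general α M C hα g hgb F hF hF0 hFM hconv
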